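/- arXiv:math/0510520 — 3 statements merged into one kernel-verified Lean document; each statement's English description precedes it below -/
import Mathlib

section
/- Let B be an n×n integer matrix whose last row is (0, …, 0, −m, ℓ) with ℓ, m > 0, q = gcd(ℓ, m), ℓ' = ℓ/q, m' = m/q. Let B̃ be the (n−1)×(n−1) matrix obtained from the first n−1 rows of B by keeping columns 1,…,n−2 and replacing the last two columns b_{n−1}, b_n (restricted to the first n−1 rows) by the single column ℓ'·b_{n−1} + m'·b_n. Then |det B| = q · |det B̃|. -/
/-!
Expanding `det B` along its last row `(0, …, 0, -m, ℓ)` gives `ℓ · det N + m · det M`, where `N`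
and `M` are the two minors of the last row at columns `n` and `n + 1`. By multilinearity in the
last column, the same combination is the determinant of the matrix whose last column is
`ℓ · b_n + m · b_{n+1}`, and pulling `q` out of `(ℓ, m) = q · (ℓ', m')` leaves `q · det B̃`.
-/

open Matrix

namespace Matrix

variable {R : Type*} [CommRing R] {n : ℕ}

def mergeLastCols (B : Matrix (Fin (n + 2)) (Fin (n + 2)) R) (a b : R) :
    Matrix (Fin (n + 1)) (Fin (n + 1)) R :=
  (B.submatrix Fin.castSucc Fin.castSucc).updateCol (Fin.last n)
    (fun i => a * B i.castSucc (Fin.last n).castSucc + b * B i.castSucc (Fin.last (n + 1)))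

omit [CommRing R] in
theorem submatrix_castSucc_updateCol_last (B : Matrix (Fin (n + 2)) (Fin (n + 2)) R) :
    (B.submatrix Fin.castSucc Fin.castSucc).updateCol (Fin.last n)
        (fun i => B i.castSucc (Fin.last (n + 1))) =
      B.submatrix Fin.castSucc (Fin.last n).castSucc.succAbove := by
  ext i j
  induction j using Fin.lastCases with
  | last => simp
  | cast j =>
    simp [Fin.succAbove_castSucc_of_lt _ _ (Fin.castSucc_lt_last j)]

theorem det_mergeLastCols (B : Matrix (Fin (n + 2)) (Fin (n + 2)) R) (a b : R) :
    (mergeLastCols B a b).det =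
      a * (B.submatrix Fin.castSucc Fin.castSucc).det +
        b * (B.submatrix Fin.castSucc (Fin.last n).castSucc.succAbove).det := by
  rw [← submatrix_castSucc_updateCol_last, mergeLastCols]
  set N := B.submatrix Fin.castSucc Fin.castSucc
  have hcol :
      (fun i => a * B i.castSucc (Fin.last n).castSucc + b * B i.castSucc (Fin.last (n + 1))) =
        a • (fun i => N i (Fin.last n)) + b • (fun i => B i.castSucc (Fin.last (n + 1))) := by
    ext i; simp [N]
  rw [hcol, det_updateCol_add, det_updateCol_smul, det_updateCol_smul, updateCol_eq_self]

theorem det_eq_det_mergeLastCols (B : Matrix (Fin (n + 2)) (Fin (n + 2)) R)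
    (hrow : ∀ j, j ≠ (Fin.last n).castSucc → j ≠ Fin.last (n + 1) → B (Fin.last (n + 1)) j = 0) :
    B.det = (mergeLastCols B (B (Fin.last (n + 1)) (Fin.last (n + 1)))
      (-B (Fin.last (n + 1)) (Fin.last n).castSucc)).det := by
  rw [det_mergeLastCols, det_succ_row B (Fin.last (n + 1)),
    Fintype.sum_eq_add _ _ (Fin.castSucc_lt_last (Fin.last n)).ne
      (fun j hj => by simp [hrow j hj.1 hj.2])]
  have hsign : ((-1 : R) ^ n) ^ 2 = 1 := by rw [← pow_mul, pow_mul']; simp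
  simp only [Fin.succAbove_last, Fin.val_castSucc, Fin.val_last, pow_add]
  linear_combination
    (B (Fin.last (n + 1)) (Fin.last (n + 1)) * (B.submatrix Fin.castSucc Fin.castSucc).det -
      B (Fin.last (n + 1)) (Fin.last n).castSucc *
        (B.submatrix Fin.castSucc (Fin.last n).castSucc.succAbove).det) * hsign

theorem det_mergeLastCols_mul (B : Matrix (Fin (n + 2)) (Fin (n + 2)) R) (c a b : R) :
    (mergeLastCols B (c * a) (c * b)).det = c * (mergeLastCols B a b).det := by
  rw [det_mergeLastCols, det_mergeLastCols]; ring

end Matrix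

/-- Determinant identity for parametric reduction: if the last row of the `(n+2)×(n+2)`
integer matrix `B` is `(0,…,0,-m,ℓ)` with `ℓ, m > 0`, `q = gcd(ℓ,m)`, `ℓ' = ℓ/q`,
`m' = m/q`, and `B̃` is obtained from the first `n+1` rows of `B` by keeping the first `n`
columns and replacing the last two columns `b_{n}, b_{n+1}` by the single column
`ℓ'·b_{n} + m'·b_{n+1}`, then `|det B| = q·|det B̃|`. -/
theorem stmt5 (n : ℕ) (ℓ m : ℕ)
    (q ℓ' m' : ℕ) (hq : q = Nat.gcd ℓ m) (hℓ' : ℓ' = ℓ / q) (hm' : m' = m / q)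
    (B : Matrix (Fin (n + 2)) (Fin (n + 2)) ℤ)
    (hlast : ∀ j : Fin (n + 2), B (Fin.last (n + 1)) j =
      if (j : ℕ) = n then -(m : ℤ) else if (j : ℕ) = n + 1 then (ℓ : ℤ) else 0)
    (Btilde : Matrix (Fin (n + 1)) (Fin (n + 1)) ℤ)
    (hBtilde : ∀ (i : Fin (n + 1)) (j : Fin (n + 1)),
      Btilde i j =
        if h : (j : ℕ) < n then B i.castSucc ⟨j, by omega⟩
        else (ℓ' : ℤ) * B i.castSucc ⟨n, by omega⟩ + (m' : ℤ) * B i.castSucc ⟨n + 1, by omega⟩) :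
    B.det.natAbs = q * Btilde.det.natAbs := by
  have hℓq : (ℓ : ℤ) = q * ℓ' := by
    rw [hℓ', hq]; exact_mod_cast (Nat.mul_div_cancel' (Nat.gcd_dvd_left ℓ m)).symm
  have hmq : (m : ℤ) = q * m' := by
    rw [hm', hq]; exact_mod_cast (Nat.mul_div_cancel' (Nat.gcd_dvd_right ℓ m)).symm
  have hrow : ∀ j, j ≠ (Fin.last n).castSucc → j ≠ Fin.last (n + 1) →
      B (Fin.last (n + 1)) j = 0 := by
    intro j hn hl
    have hjn : (j : ℕ) ≠ n := fun h => hn (Fin.ext h)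
    have hjl : (j : ℕ) ≠ n + 1 := fun h => hl (Fin.ext h)
    simp [hlast, hjn, hjl]
  have hBtilde' : Btilde = B.mergeLastCols ℓ' m' := by
    ext i j
    rw [hBtilde]
    induction j using Fin.lastCases with
    | last => simp [mergeLastCols]; rfl
    | cast j => simp [mergeLastCols]; rfl
  have hdet : B.det = q * Btilde.det := by
    have hℓB : B (Fin.last (n + 1)) (Fin.last (n + 1)) = ℓ := by simp [hlast]
    have hmB : B (Fin.last (n + 1)) (Fin.last n).castSucc = -m := by simp [hlast]
    rw [det_eq_det_mergeLastCols B hrow, hℓB, hmB, neg_neg, hℓq, hmq, det_mergeLastCols_mul,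
      hBtilde']
  rw [hdet, Int.natAbs_mul, Int.natAbs_natCast]
end

section
/- Let B be an n×n real matrix with nonpositive off-diagonal entries which is indecomposable (irreducible): there is no nontrivial partition [n] = I ⊔ J with B_{ij} = 0 for all i ∈ I, j ∈ J. If u ∈ ℝ^n has all entries ≥ 0 and B·u has all entries ≥ 0, then either u = 0 or all entries of u are strictly positive. -/
/-- Vinberg's lemma: if `B` is an `n×n` real matrix with nonpositive off-diagonal entries
which is indecomposable (no nontrivial partition `[n] = I ⊔ J` with `B_{ij} = 0` for
`i ∈ I`, `j ∈ J`), and `u ≥ 0` entrywise with `B·u ≥ 0` entrywise, then `u = 0` or all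
entries of `u` are strictly positive. -/
theorem stmt7 (n : ℕ) (B : Matrix (Fin n) (Fin n) ℝ)
    (hoff : ∀ i j, i ≠ j → B i j ≤ 0)
    (hirr : ¬ ∃ I : Set (Fin n), I.Nonempty ∧ Iᶜ.Nonempty ∧
      ∀ i ∈ I, ∀ j ∈ Iᶜ, B i j = 0)
    (u : Fin n → ℝ) (hu : ∀ i, 0 ≤ u i) (hBu : ∀ i, 0 ≤ B.mulVec u i) :
    u = 0 ∨ ∀ i, 0 < u i := by
  set I : Set (Fin n) := {i | u i = 0} with hI
  by_cases hne : I.Nonempty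
  · by_cases hcne : Iᶜ.Nonempty
    · exfalso
      apply hirr
      refine ⟨I, hne, hcne, ?_⟩
      intro i hi j hj
      have hui : u i = 0 := hi
      have key : ∀ k, B i k * u k ≤ 0 := by
        intro k
        by_cases hk : k = i
        · subst hk; simp [hui]
        · exact mul_nonpos_of_nonpos_of_nonneg (hoff i k (Ne.symm (Ne.symm (fun h => hk h.symm)))) (hu k)
      have hsum : ∑ k, B i k * u k = B.mulVec u i := by
        simp [Matrix.mulVec, dotProduct]
      have hle : B.mulVec u i ≤ 0 := by
        rw [← hsum]
        exact Finset.sum_nonpos fun k _ => key k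
      have heq : ∑ k, B i k * u k = 0 := by
        rw [hsum]; exact le_antisymm hle (hBu i)
      have hall : ∀ k ∈ Finset.univ, B i k * u k = 0 :=
        (Finset.sum_eq_zero_iff_of_nonpos fun k _ => key k).mp heq
      have huj : 0 < u j := by
        have : u j ≠ 0 := hj
        exact lt_of_le_of_ne (hu j) (Ne.symm this)
      have := hall j (Finset.mem_univ j)
      rcases mul_eq_zero.mp this with h | h
      · exact h
      · exact absurd h (ne_of_gt huj)
    · left
      funext i
      have : i ∈ I := by
        by_contra h
        exact hcne ⟨i, h⟩
      exact this
  · right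
    intro i
    have : i ∉ I := fun h => hne ⟨i, h⟩
    exact lt_of_le_of_ne (hu i) (Ne.symm this)
end

section
/- Let G be a finite bipartite (undirected) graph, oriented so that every edge goes from one part V_1 to the other part V_2 (making G a DAG of depth one). Then the map sending a full (descendant-closed) subgraph H of this DAG to its set of sources is a bijection between full subgraphs of G and independent sets of the undirected bipartite graph. -/
/-- For a finite bipartite graph oriented from part `V₁` to part `V₂` (a depth-one DAG),
the map sending a full (descendant-closed) subgraph to its set of sources is a bijection
between full subgraphs and independent sets of the undirected bipartite graph. -/
theorem stmt12 {V : Type*} [Fintype V] (V₁ V₂ : Set V)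
    (hpart : ∀ v, (v ∈ V₁ ∨ v ∈ V₂) ∧ ¬ (v ∈ V₁ ∧ v ∈ V₂))
    (E : V → V → Prop) (hE : ∀ v w, E v w → v ∈ V₁ ∧ w ∈ V₂) :
    Set.BijOn (fun H : Set V => {s | s ∈ H ∧ ∀ v ∈ H, ¬ E v s})
      {H : Set V | ∀ v ∈ H, ∀ w, E v w → w ∈ H}
      {S : Set V | ∀ v ∈ S, ∀ w ∈ S, ¬ (E v w ∨ E w v)} := by
  -- key: for closed H, H = S ∪ N(S) where S = sources of H
  have key : ∀ H : Set V, (∀ v ∈ H, ∀ w, E v w → w ∈ H) →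
      H = {s | s ∈ H ∧ ∀ v ∈ H, ¬ E v s} ∪
        {w | ∃ s, (s ∈ H ∧ ∀ v ∈ H, ¬ E v s) ∧ E s w} := by
    intro H hH
    ext w
    constructor
    · intro hw
      by_cases hsrc : ∀ v ∈ H, ¬ E v w
      · exact Or.inl ⟨hw, hsrc⟩
      · push_neg at hsrc
        obtain ⟨v, hvH, hvw⟩ := hsrc
        refine Or.inr ⟨v, ⟨hvH, ?_⟩, hvw⟩
        intro u huH huv
        exact (hpart v).2 ⟨(hE v w hvw).1, (hE u v huv).2⟩
    · rintro (⟨hw, _⟩ | ⟨s, ⟨hsH, _⟩, hsw⟩)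
      · exact hw
      · exact hH s hsH w hsw
  refine ⟨?_, ?_, ?_⟩
  · -- maps to
    intro H hH
    rintro v ⟨hvH, hv⟩ w ⟨hwH, hw⟩ (h | h)
    · exact hw v hvH h
    · exact hv w hwH h
  · -- injective
    intro H₁ h₁ H₂ h₂ heq
    rw [key H₁ h₁, key H₂ h₂]
    simp only at heq
    have h' := Set.ext_iff.mp heq
    simp only [Set.mem_setOf_eq] at h'
    rw [heq]
    simp only [h']
  · -- surjective
    intro S hS
    refine ⟨S ∪ {w | ∃ s ∈ S, E s w}, ?_, ?_⟩
    · -- closed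
      rintro v (hv | ⟨u, huS, huv⟩) w hvw
      · exact Or.inr ⟨v, hv, hvw⟩
      · exact absurd ⟨(hE v w hvw).1, (hE u v huv).2⟩ (hpart v).2
    · -- sources = S
      ext t
      simp only [Set.mem_setOf_eq, Set.mem_union]
      constructor
      · rintro ⟨(ht | ⟨s, hsS, hst⟩), hsrc⟩
        · exact ht
        · exact absurd hst (hsrc s (Or.inl hsS))
      · intro ht
        refine ⟨Or.inl ht, ?_⟩
        rintro v (hv | ⟨u, huS, huv⟩) hvt
        · exact hS v hv t ht (Or.inl hvt)
        · exact (hpart v).2 ⟨(hE v t hvt).1, (hE u v huv).2⟩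
end
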